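/- arXiv:2109.02192 — 4 statements merged into one kernel-verified Lean document; each statement's English description precedes it below -/
import Mathlib

section
/- With graph Laplacian L of a balanced directed graph, perturbation matrix P with P𝟏 = 0, nonzero scalar ε₁ and scalar δε, define x̂(0) = x(0) + δε(Lx(0) - Pᵀ𝟏), ε̂₁ = ε₁ + δε, and P̂ with entries p̂_i^{(j)} = p_i^{(j)} - (x̂_i(0) - x_i(0)) for edges (i,j) ∈ E and diagonal entries making rows of P̂ sum to zero. Then the states after one perturbed iteration coincide: (I - ε̂₁L)x̂(0) + ε̂₁P̂ᵀ𝟏 = (I - ε₁L)x(0) + ε₁Pᵀ𝟏. -/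
open Matrix BigOperators Finset

theorem stmt4 {N : ℕ} (A : Matrix (Fin N) (Fin N) ℝ)
    (hA01 : ∀ i j, A i j = 0 ∨ A i j = 1)
    (hAdiag : ∀ i, A i i = 0)
    (hbal : ∀ i, ∑ j, A i j = ∑ j, A j i)
    (L : Matrix (Fin N) (Fin N) ℝ)
    (hL : ∀ i j, L i j = if i = j then ∑ k ∈ Finset.univ.erase i, A i k else -A i j)
    (P : Matrix (Fin N) (Fin N) ℝ)
    (hP1 : P.mulVec 1 = 0)
    (hPsupp : ∀ i j, i ≠ j → A j i = 0 → P i j = 0)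
    (x0 : Fin N → ℝ) (ε₁ δε : ℝ) (hε₁ : ε₁ ≠ 0)
    (δx : Fin N → ℝ) (hδx : δx = δε • (L.mulVec x0 - Pᵀ.mulVec 1))
    (Phat : Matrix (Fin N) (Fin N) ℝ)
    (hPhatoff : ∀ i j, i ≠ j → Phat i j = P i j - A j i * δx i)
    (hPhatdiag : ∀ i, Phat i i = -∑ j ∈ Finset.univ.erase i, Phat i j) :
    (1 - (ε₁ + δε) • L).mulVec (x0 + δx) + (ε₁ + δε) • Phatᵀ.mulVec 1
      = (1 - ε₁ • L).mulVec x0 + ε₁ • Pᵀ.mulVec 1 := by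
  have hProw : ∀ i, ∑ j, P i j = 0 := by
    intro i
    have := congrFun hP1 i
    simpa [mulVec, dotProduct] using this
  have key : Phatᵀ.mulVec 1 = Pᵀ.mulVec 1 + L.mulVec δx := by
    funext i
    simp only [mulVec, dotProduct, transpose_apply, Pi.add_apply, Pi.one_apply, mul_one]
    rw [← Finset.sum_erase_add _ _ (mem_univ i), ← Finset.sum_erase_add _ (fun j => P j i) (mem_univ i),
        ← Finset.sum_erase_add _ (fun j => L i j * δx j) (mem_univ i)]
    have hdiag : Phat i i = -∑ j ∈ univ.erase i, (P i j - A j i * δx i) := by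
      rw [hPhatdiag i]
      congr 1
      exact Finset.sum_congr rfl (fun j hj => hPhatoff i j (Finset.ne_of_mem_erase hj).symm)
    have hoff : ∑ j ∈ univ.erase i, Phat j i = ∑ j ∈ univ.erase i, (P j i - A i j * δx j) := by
      exact Finset.sum_congr rfl (fun j hj => hPhatoff j i (Finset.ne_of_mem_erase hj))
    have hLoff : ∑ j ∈ univ.erase i, L i j * δx j = ∑ j ∈ univ.erase i, (-A i j) * δx j := by
      refine Finset.sum_congr rfl (fun j hj => ?_)
      rw [hL i j, if_neg (Finset.ne_of_mem_erase hj).symm]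
    have hLdiag : L i i = ∑ k ∈ univ.erase i, A i k := by rw [hL i i, if_pos rfl]
    have hPii : P i i = -∑ j ∈ univ.erase i, P i j := by
      have := hProw i
      rw [← Finset.sum_erase_add _ _ (mem_univ i)] at this
      linarith
    have hAcol : ∑ j ∈ univ.erase i, A j i = ∑ j ∈ univ.erase i, A i j := by
      have h1 : ∑ j ∈ univ.erase i, A j i + A i i = ∑ j, A j i :=
        Finset.sum_erase_add _ _ (mem_univ i)
      have h2 : ∑ j ∈ univ.erase i, A i j + A i i = ∑ j, A i j :=
        Finset.sum_erase_add _ _ (mem_univ i)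
      have := hbal i
      linarith
    rw [hdiag, hoff, hLoff, hLdiag, hPii]
    simp only [Finset.sum_sub_distrib, neg_mul, Finset.sum_neg_distrib]
    have : ∑ j ∈ univ.erase i, A j i * δx i = (∑ j ∈ univ.erase i, A i j) * δx i := by
      rw [← Finset.sum_mul, hAcol]
    rw [this]
    ring
  rw [key, hδx]
  have expand : ∀ (c : ℝ) (v : Fin N → ℝ),
      (1 - c • L).mulVec v = v - c • L.mulVec v := by
    intro c v
    rw [sub_mulVec, one_mulVec, smul_mulVec]
  rw [expand, expand, mulVec_add]
  set a := L.mulVec x0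
  set b := Pᵀ.mulVec 1
  set c := L.mulVec (δε • (a - b))
  module
end

section
/- In the two implementations of Lemma 1 (internal-attacker indistinguishability), the states after the first iteration agree: given initial states x̃₁(0) ∈ ℝ arbitrary, x̃₂(0) = x₁(0) + x₂(0) - x̃₁(0), x̃₃(0) = x₃(0), and the modified perturbations p̃₁^{(1)} = p₁^{(1)} + d₁δ, p̃₁^{(2)} = p₁^{(2)} - a₂₁δ, P̃₁^{(3)} = P₁^{(3)} - A₃₁ᵀδ, p̃₂^{(1)} = p₂^{(1)} + (1/ε₁ - 1)δ', p̃₂^{(2)} = p₂^{(2)} + (d₂ - 1/ε₁)δ', P̃₂^{(3)} = P₂^{(3)} - A₃₂ᵀδ', where δ = x̃₁(0) - x₁(0), δ' = x̃₂(0) - x₂(0) = -δ, then (I - ε₁L)x̃(0) + ε₁P̃ᵀ𝟏 = (I - ε₁L)x(0) + ε₁Pᵀ𝟏. -/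
open Matrix BigOperators Finset

/-- Lemma 1 (discrete, internal attacker): the states after the first perturbed
iteration coincide in the two implementations. Agent 1 is `i1`, its in-neighbor
agent 2 is `i2` (so `A i1 i2 = 1`), and the remaining agents form `V³`. -/
theorem stmt5 {N : ℕ} (hN : 3 ≤ N)
    (A L P Ptilde : Matrix (Fin N) (Fin N) ℝ)
    (i1 i2 : Fin N) (h12 : i1 ≠ i2)
    (hA01 : ∀ i j, A i j = 0 ∨ A i j = 1)
    (hAdiag : ∀ i, A i i = 0)
    (hbal : ∀ i, ∑ j, A i j = ∑ j, A j i)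
    (hL : ∀ i j, L i j = if i = j then ∑ k ∈ Finset.univ.erase i, A i k else -A i j)
    (ha12 : A i1 i2 = 1)
    (hP1 : P.mulVec 1 = 0)
    (ε₁ : ℝ) (hε₁ : ε₁ ≠ 0) (δ : ℝ)
    (d₁ d₂ : ℝ) (hd₁ : d₁ = ∑ j, A j i1) (hd₂ : d₂ = ∑ j, A j i2)
    (x xt : Fin N → ℝ)
    (hx1 : xt i1 = x i1 + δ) (hx2 : xt i2 = x i2 - δ)
    (hx3 : ∀ j, j ≠ i1 → j ≠ i2 → xt j = x j)
    (hPt11 : Ptilde i1 i1 = P i1 i1 + d₁ * δ)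
    (hPt12 : Ptilde i1 i2 = P i1 i2 - A i2 i1 * δ)
    (hPt13 : ∀ j, j ≠ i1 → j ≠ i2 → Ptilde i1 j = P i1 j - A j i1 * δ)
    (hPt21 : Ptilde i2 i1 = P i2 i1 + (1 / ε₁ - 1) * (-δ))
    (hPt22 : Ptilde i2 i2 = P i2 i2 + (d₂ - 1 / ε₁) * (-δ))
    (hPt23 : ∀ j, j ≠ i1 → j ≠ i2 → Ptilde i2 j = P i2 j - A j i2 * (-δ))
    (hPt3 : ∀ i, i ≠ i1 → i ≠ i2 → ∀ j, Ptilde i j = P i j) :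
    (1 - ε₁ • L).mulVec xt + ε₁ • Ptildeᵀ.mulVec 1
      = (1 - ε₁ • L).mulVec x + ε₁ • Pᵀ.mulVec 1 := by
  have hLd1 : L i1 i1 = d₁ := by
    rw [hL, if_pos rfl, hd₁, ← hbal i1, Finset.sum_erase _ (hAdiag i1)]
  have hLd2 : L i2 i2 = d₂ := by
    rw [hL, if_pos rfl, hd₂, ← hbal i2, Finset.sum_erase _ (hAdiag i2)]
  have hLsum : ∀ i, L.mulVec xt i = L.mulVec x i + L i i1 * δ - L i i2 * δ := by
    intro i
    have key : ∀ j, L i j * xt j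
        = (L i j * x j + (if j = i1 then L i i1 * δ else 0))
          - (if j = i2 then L i i2 * δ else 0) := by
      intro j
      by_cases h1 : j = i1
      · subst h1
        rw [if_pos rfl, if_neg h12, hx1]; ring
      · by_cases h2 : j = i2
        · subst h2
          rw [if_neg h1, if_pos rfl, hx2]; ring
        · rw [if_neg h1, if_neg h2, hx3 j h1 h2]; ring
    simp only [Matrix.mulVec, dotProduct]
    rw [Finset.sum_congr rfl fun j _ => key j, Finset.sum_sub_distrib,
      Finset.sum_add_distrib]
    simp [Finset.sum_ite_eq']
  have hPsum : ∀ i, ∑ j, Ptilde j i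
      = ∑ j, P j i + (Ptilde i1 i - P i1 i) + (Ptilde i2 i - P i2 i) := by
    intro i
    have key : ∀ j, Ptilde j i
        = P j i + (if j = i1 then Ptilde i1 i - P i1 i else 0)
          + (if j = i2 then Ptilde i2 i - P i2 i else 0) := by
      intro j
      by_cases h1 : j = i1
      · subst h1
        rw [if_pos rfl, if_neg h12]; ring
      · by_cases h2 : j = i2
        · subst h2
          rw [if_neg h1, if_pos rfl]; ring
        · rw [if_neg h1, if_neg h2, hPt3 j h1 h2]; ring
    rw [Finset.sum_congr rfl fun j _ => key j, Finset.sum_add_distrib,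
      Finset.sum_add_distrib]
    simp [Finset.sum_ite_eq']
  have hPT : ∀ (Q : Matrix (Fin N) (Fin N) ℝ) (i : Fin N),
      Qᵀ.mulVec 1 i = ∑ j, Q j i := by
    intro Q i
    simp [Matrix.mulVec, dotProduct, Matrix.transpose_apply]
  funext i
  simp only [Pi.add_apply, Pi.smul_apply, smul_eq_mul, Matrix.sub_mulVec,
    Matrix.one_mulVec, Matrix.smul_mulVec, Pi.sub_apply]
  rw [hPT, hPT, hLsum i, hPsum i]
  by_cases h1 : i = i1
  · subst h1
    rw [hx1, hPt11, hPt21, hL i i2, if_neg h12, ha12, hLd1]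
    field_simp
    ring
  · by_cases h2 : i = i2
    · subst h2
      rw [hx2, hPt12, hPt22, hL i i1, if_neg (Ne.symm h12), hLd2]
      field_simp
      ring
    · rw [hx3 i h1 h2, hPt13 i h1 h2, hPt23 i h1 h2, hL i i1, if_neg h1,
        hL i i2, if_neg h2]
      ring
end

section
/- For a strongly connected balanced digraph with Laplacian L and ε ∈ (0, 1/max_i d_i), the matrix W = I - εL is row-stochastic and column-stochastic with positive diagonal entries, and the discrete iteration x[k+1] = Wx[k] converges to (1/N)(𝟏ᵀx[0])·𝟏. -/
open Matrix BigOperators Finset Filter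

lemma inf_le_sup_aux {N : ℕ} (hne : (Finset.univ : Finset (Fin N)).Nonempty) (x : Fin N → ℝ) :
    Finset.univ.inf' hne x ≤ Finset.univ.sup' hne x := by
  obtain ⟨i, -⟩ := hne
  exact le_trans (Finset.inf'_le x (Finset.mem_univ i)) (Finset.le_sup' x (Finset.mem_univ i))

lemma mulVec_le_contr {N : ℕ} (hne : (Finset.univ : Finset (Fin N)).Nonempty)
    (P : Matrix (Fin N) (Fin N) ℝ) (δ : ℝ) (hδ0 : 0 ≤ δ)
    (hδ : ∀ i j, δ ≤ P i j) (hP1 : ∀ i, ∑ j, P i j = 1) (x : Fin N → ℝ) (i : Fin N) :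
    P.mulVec x i ≤ Finset.univ.sup' hne x - δ * (Finset.univ.sup' hne x - Finset.univ.inf' hne x) := by
  obtain ⟨l0, -, hl0⟩ := Finset.exists_mem_eq_inf' hne x
  set S := Finset.univ.sup' hne x with hS
  set m := Finset.univ.inf' hne x with hm
  have hsum : P i l0 * x l0 + ∑ j ∈ Finset.univ.erase l0, P i j * x j = P.mulVec x i := by
    rw [Matrix.mulVec, dotProduct]
    exact Finset.add_sum_erase Finset.univ (fun j => P i j * x j) (Finset.mem_univ l0)
  have hPsum : P i l0 + ∑ j ∈ Finset.univ.erase l0, P i j = 1 := by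
    rw [Finset.add_sum_erase Finset.univ (fun j => P i j) (Finset.mem_univ l0)]; exact hP1 i
  have h1 : ∑ j ∈ Finset.univ.erase l0, P i j * x j ≤ (1 - P i l0) * S := by
    have : ∑ j ∈ Finset.univ.erase l0, P i j * x j ≤ ∑ j ∈ Finset.univ.erase l0, P i j * S := by
      refine Finset.sum_le_sum fun j _ => ?_
      exact mul_le_mul_of_nonneg_left (Finset.le_sup' x (Finset.mem_univ j)) (le_trans hδ0 (hδ i j))
    rw [← Finset.sum_mul] at this
    have e : ∑ j ∈ Finset.univ.erase l0, P i j = 1 - P i l0 := by linarith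
    rwa [e] at this
  have hxm : x l0 = m := hl0.symm
  have hSm : m ≤ S := inf_le_sup_aux hne x
  have hδP : δ ≤ P i l0 := hδ i l0
  nlinarith [hsum, h1, hδP, hSm]

lemma inf_le_mulVec_contr {N : ℕ} (hne : (Finset.univ : Finset (Fin N)).Nonempty)
    (P : Matrix (Fin N) (Fin N) ℝ) (δ : ℝ) (hδ0 : 0 ≤ δ)
    (hδ : ∀ i j, δ ≤ P i j) (hP1 : ∀ i, ∑ j, P i j = 1) (x : Fin N → ℝ) (i : Fin N) :
    Finset.univ.inf' hne x + δ * (Finset.univ.sup' hne x - Finset.univ.inf' hne x) ≤ P.mulVec x i := by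
  obtain ⟨l0, -, hl0⟩ := Finset.exists_mem_eq_sup' hne x
  set S := Finset.univ.sup' hne x with hS
  set m := Finset.univ.inf' hne x with hm
  have hsum : P i l0 * x l0 + ∑ j ∈ Finset.univ.erase l0, P i j * x j = P.mulVec x i := by
    rw [Matrix.mulVec, dotProduct]
    exact Finset.add_sum_erase Finset.univ (fun j => P i j * x j) (Finset.mem_univ l0)
  have hPsum : P i l0 + ∑ j ∈ Finset.univ.erase l0, P i j = 1 := by
    rw [Finset.add_sum_erase Finset.univ (fun j => P i j) (Finset.mem_univ l0)]; exact hP1 i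
  have h1 : (1 - P i l0) * m ≤ ∑ j ∈ Finset.univ.erase l0, P i j * x j := by
    have : ∑ j ∈ Finset.univ.erase l0, P i j * m ≤ ∑ j ∈ Finset.univ.erase l0, P i j * x j := by
      refine Finset.sum_le_sum fun j _ => ?_
      exact mul_le_mul_of_nonneg_left (Finset.inf'_le x (Finset.mem_univ j)) (le_trans hδ0 (hδ i j))
    rw [← Finset.sum_mul] at this
    have e : ∑ j ∈ Finset.univ.erase l0, P i j = 1 - P i l0 := by linarith
    rwa [e] at this
  have hxm : x l0 = S := hl0.symm
  have hSm : m ≤ S := inf_le_sup_aux hne x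
  have hδP : δ ≤ P i l0 := hδ i l0
  nlinarith [hsum, h1, hδP, hSm]

lemma sup'_mulVec_le {N : ℕ} (hne : (Finset.univ : Finset (Fin N)).Nonempty)
    (P : Matrix (Fin N) (Fin N) ℝ) (hP0 : ∀ i j, 0 ≤ P i j) (hP1 : ∀ i, ∑ j, P i j = 1)
    (x : Fin N → ℝ) : Finset.univ.sup' hne (P.mulVec x) ≤ Finset.univ.sup' hne x := by
  refine Finset.sup'_le hne _ fun i _ => ?_
  have := mulVec_le_contr hne P 0 le_rfl (fun i j => hP0 i j) hP1 x i
  simpa using this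

lemma le_inf'_mulVec {N : ℕ} (hne : (Finset.univ : Finset (Fin N)).Nonempty)
    (P : Matrix (Fin N) (Fin N) ℝ) (hP0 : ∀ i j, 0 ≤ P i j) (hP1 : ∀ i, ∑ j, P i j = 1)
    (x : Fin N → ℝ) : Finset.univ.inf' hne x ≤ Finset.univ.inf' hne (P.mulVec x) := by
  refine Finset.le_inf' hne _ fun i _ => ?_
  have := inf_le_mulVec_contr hne P 0 le_rfl (fun i j => hP0 i j) hP1 x i
  simpa using this

/-- For a strongly connected balanced digraph and 0 < ε < 1/maxᵢ dᵢ, the matrix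
W = I - εL is doubly stochastic with positive diagonal, and W^k x₀ converges to
the average consensus value. -/
theorem stmt15 {N : ℕ} (hN : 0 < N)
    (A : Matrix (Fin N) (Fin N) ℝ)
    (hA01 : ∀ i j, A i j = 0 ∨ A i j = 1)
    (hAdiag : ∀ i, A i i = 0)
    (hbal : ∀ i, ∑ j, A i j = ∑ j, A j i)
    (hconn : ∀ i j : Fin N, ∃ k : ℕ, (A ^ k) i j ≠ 0)
    (d : Fin N → ℝ) (hd : ∀ i, d i = ∑ j, A i j)
    (L : Matrix (Fin N) (Fin N) ℝ) (hL : L = Matrix.diagonal d - A)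
    (ε : ℝ) (hε0 : 0 < ε)
    (hεmax : ε < 1 / Finset.univ.sup' (Finset.univ_nonempty_iff.mpr ⟨⟨0, hN⟩⟩) d)
    (W : Matrix (Fin N) (Fin N) ℝ) (hW : W = 1 - ε • L) :
    (∀ i j, 0 ≤ W i j) ∧ (∀ i, ∑ j, W i j = 1) ∧ (∀ j, ∑ i, W i j = 1) ∧
    (∀ i, 0 < W i i) ∧
    ∀ x0 : Fin N → ℝ, Tendsto (fun k : ℕ => (W ^ k).mulVec x0) atTop
      (nhds fun _ => ((1 : Fin N → ℝ) ⬝ᵥ x0) / N) := by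
  have hne : (Finset.univ : Finset (Fin N)).Nonempty := Finset.univ_nonempty_iff.mpr ⟨⟨0, hN⟩⟩
  have hA0 : ∀ i j, 0 ≤ A i j := fun i j => (hA01 i j).elim (fun h => h.ge) (fun h => h ▸ zero_le_one)
  have hd0 : ∀ i, 0 ≤ d i := fun i => (hd i) ▸ Finset.sum_nonneg fun j _ => hA0 i j
  set M := Finset.univ.sup' hne d with hMdef
  have hM0 : 0 < M := by
    rcases lt_or_eq_of_le (le_trans (hd0 ⟨0, hN⟩) (Finset.le_sup' d (Finset.mem_univ ⟨0, hN⟩))) with h | h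
    · exact h
    · exfalso
      have hMz : M = 0 := h.symm
      rw [hMz] at hεmax
      simp at hεmax
      linarith
  have hεM : ε * M < 1 := by
    rw [lt_div_iff₀ hM0] at hεmax; exact hεmax
  have hεd : ∀ i, ε * d i < 1 := fun i =>
    lt_of_le_of_lt (mul_le_mul_of_nonneg_left (Finset.le_sup' d (Finset.mem_univ i)) hε0.le) hεM
  have hWd : ∀ i, W i i = 1 - ε * d i := by
    intro i
    rw [hW, hL]
    simp [Matrix.sub_apply, Matrix.one_apply_eq, Matrix.diagonal_apply_eq, hAdiag, smul_eq_mul]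
  have hWo : ∀ i j, i ≠ j → W i j = ε * A i j := by
    intro i j h
    rw [hW, hL]
    simp [Matrix.sub_apply, Matrix.one_apply_ne h, Matrix.diagonal_apply_ne _ h, smul_eq_mul]
  have hWdiag : ∀ i, 0 < W i i := fun i => by rw [hWd i]; linarith [hεd i]
  have hWnn : ∀ i j, 0 ≤ W i j := by
    intro i j
    by_cases h : i = j
    · subst h; exact (hWdiag i).le
    · rw [hWo i j h]; exact mul_nonneg hε0.le (hA0 i j)
  have hcolA : ∀ j, ∑ i, A i j = d j := fun j => ((hd j).trans (hbal j)).symm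
  have hWentry : ∀ i j, W i j = (if i = j then (1:ℝ) else 0) - ε * ((if i = j then d i else 0) - A i j) := by
    intro i j
    rw [hW, hL]
    by_cases h : i = j <;>
      simp [Matrix.sub_apply, Matrix.one_apply, Matrix.diagonal_apply, h, smul_eq_mul]
  have hWrow : ∀ i, ∑ j, W i j = 1 := by
    intro i
    have e1 : ∑ j, (if i = j then (1:ℝ) else 0) = 1 := by simp
    have e2 : ∑ j, (if i = j then d i else 0) = d i := by simp
    calc ∑ j, W i j = ∑ j, ((if i = j then (1:ℝ) else 0) - ε * ((if i = j then d i else 0) - A i j)) :=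
          Finset.sum_congr rfl fun j _ => hWentry i j
      _ = 1 := by
          rw [Finset.sum_sub_distrib, ← Finset.mul_sum, Finset.sum_sub_distrib, e1, e2, ← hd i]
          ring
  have hWcol : ∀ j, ∑ i, W i j = 1 := by
    intro j
    have e1 : ∑ i, (if i = j then (1:ℝ) else 0) = 1 := by simp
    have e2 : ∑ i, (if i = j then d i else 0) = d j := by simp
    calc ∑ i, W i j = ∑ i, ((if i = j then (1:ℝ) else 0) - ε * ((if i = j then d i else 0) - A i j)) :=
          Finset.sum_congr rfl fun i _ => hWentry i j
      _ = 1 := by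
          rw [Finset.sum_sub_distrib, ← Finset.mul_sum, Finset.sum_sub_distrib, e1, e2, hcolA j]
          ring
  refine ⟨hWnn, hWrow, hWcol, hWdiag, ?_⟩
  -- powers of W are entrywise nonnegative
  have hpow_nn : ∀ k, ∀ i j, 0 ≤ (W ^ k) i j := by
    intro k
    induction k with
    | zero => intro i j; by_cases h : i = j <;> simp [Matrix.one_apply, h]
    | succ k ih =>
        intro i j
        rw [pow_succ, Matrix.mul_apply]
        exact Finset.sum_nonneg fun l _ => mul_nonneg (ih i l) (hWnn l j)
  have hApow_nn : ∀ k, ∀ i j, 0 ≤ (A ^ k) i j := by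
    intro k
    induction k with
    | zero => intro i j; by_cases h : i = j <;> simp [Matrix.one_apply, h]
    | succ k ih =>
        intro i j
        rw [pow_succ, Matrix.mul_apply]
        exact Finset.sum_nonneg fun l _ => mul_nonneg (ih i l) (hA0 l j)
  have hWge : ∀ i j, ε * A i j ≤ W i j := by
    intro i j
    by_cases h : i = j
    · subst h; rw [hAdiag i, mul_zero]; exact (hWdiag i).le
    · rw [hWo i j h]
  have hpow_ge : ∀ k, ∀ i j, ε ^ k * (A ^ k) i j ≤ (W ^ k) i j := by
    intro k
    induction k with
    | zero => intro i j; simp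
    | succ k ih =>
        intro i j
        rw [pow_succ W k, pow_succ A k, pow_succ ε k, Matrix.mul_apply, Matrix.mul_apply, Finset.mul_sum]
        refine Finset.sum_le_sum fun l _ => ?_
        calc ε ^ k * ε * ((A ^ k) i l * A l j) = (ε ^ k * (A ^ k) i l) * (ε * A l j) := by ring
          _ ≤ (W ^ k) i l * W l j :=
              mul_le_mul (ih i l) (hWge l j) (mul_nonneg hε0.le (hA0 l j)) (hpow_nn k i l)
  have hpos_step : ∀ k i j, 0 < (W ^ k) i j → 0 < (W ^ (k+1)) i j := by
    intro k i j h
    rw [pow_succ, Matrix.mul_apply]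
    refine lt_of_lt_of_le (mul_pos h (hWdiag j)) ?_
    exact Finset.single_le_sum (f := fun l => (W ^ k) i l * W l j)
      (fun l _ => mul_nonneg (hpow_nn k i l) (hWnn l j)) (Finset.mem_univ j)
  have hpos_mono : ∀ k m, k ≤ m → ∀ i j, 0 < (W ^ k) i j → 0 < (W ^ m) i j := by
    intro k m hkm i j h
    induction hkm with
    | refl => exact h
    | step _ ih => exact hpos_step _ _ _ ih
  have hkey : ∀ i j, ∃ k, 0 < (W ^ k) i j := by
    intro i j
    obtain ⟨k, hk⟩ := hconn i j
    exact ⟨k, lt_of_lt_of_le (mul_pos (pow_pos hε0 k)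
      ((hApow_nn k i j).lt_of_ne (Ne.symm hk))) (hpow_ge k i j)⟩
  choose K hK using hkey
  set m0 := (Finset.univ : Finset (Fin N × Fin N)).sup (fun p => K p.1 p.2) + 1 with hm0def
  have hm0pos : 0 < m0 := Nat.succ_pos _
  have hPpos : ∀ i j, 0 < (W ^ m0) i j := fun i j =>
    hpos_mono (K i j) m0
      (le_trans (Finset.le_sup (f := fun p : Fin N × Fin N => K p.1 p.2) (Finset.mem_univ (i, j)))
        (Nat.le_succ _)) i j (hK i j)
  -- powers are row stochastic
  have hrow_pow : ∀ k i, ∑ j, (W ^ k) i j = 1 := by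
    intro k
    induction k with
    | zero => intro i; simp [Matrix.one_apply]
    | succ k ih =>
        intro i
        simp only [pow_succ, Matrix.mul_apply]
        rw [Finset.sum_comm]
        calc ∑ l, ∑ j, (W ^ k) i l * W l j = ∑ l, (W ^ k) i l * ∑ j, W l j := by
              simp [Finset.mul_sum]
          _ = 1 := by simp only [hWrow, mul_one]; exact ih i
  intro x0
  set y : ℕ → Fin N → ℝ := fun k => (W ^ k).mulVec x0 with hy
  have hy_add : ∀ m k, y (m + k) = (W ^ m).mulVec (y k) := by
    intro m k
    simp only [hy, Matrix.mulVec_mulVec, ← pow_add]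
  have hy_succ : ∀ k, y (k + 1) = W.mulVec (y k) := by
    intro k
    have := hy_add 1 k
    rw [Nat.add_comm 1 k] at this
    simpa using this
  -- sum preservation
  have hsum_step : ∀ v : Fin N → ℝ, ∑ i, W.mulVec v i = ∑ i, v i := by
    intro v
    simp only [Matrix.mulVec, dotProduct]
    rw [Finset.sum_comm]
    calc ∑ j, ∑ i, W i j * v j = ∑ j, (∑ i, W i j) * v j := by simp [Finset.sum_mul]
      _ = ∑ j, v j := by simp [hWcol]
  have hsum_pres : ∀ k, ∑ i, y k i = ∑ i, x0 i := by
    intro k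
    induction k with
    | zero => simp [hy]
    | succ k ih => rw [hy_succ k, hsum_step]; exact ih
  -- the spread
  set S : ℕ → ℝ := fun k => Finset.univ.sup' hne (y k) - Finset.univ.inf' hne (y k) with hSdef
  have hS_nonneg : ∀ k, 0 ≤ S k := fun k => sub_nonneg.mpr (inf_le_sup_aux hne (y k))
  have hS_anti_step : ∀ k, S (k + 1) ≤ S k := by
    intro k
    have h1 := sup'_mulVec_le hne W hWnn hWrow (y k)
    have h2 := le_inf'_mulVec hne W hWnn hWrow (y k)
    rw [← hy_succ k] at h1 h2
    simp only [hSdef]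
    linarith
  have hS_anti : ∀ j k, j ≤ k → S k ≤ S j := by
    intro j k hjk
    induction hjk with
    | refl => exact le_rfl
    | step _ ih => exact le_trans (hS_anti_step _) ih
  -- contraction by W^m0
  set δ : ℝ := Finset.univ.inf' (⟨(⟨0, hN⟩, ⟨0, hN⟩), Finset.mem_univ _⟩ :
      (Finset.univ : Finset (Fin N × Fin N)).Nonempty) (fun p => (W ^ m0) p.1 p.2) with hδdef
  have hδpos : 0 < δ := by
    obtain ⟨p, -, hp⟩ := Finset.exists_mem_eq_inf'
      (⟨(⟨0, hN⟩, ⟨0, hN⟩), Finset.mem_univ _⟩ :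
        (Finset.univ : Finset (Fin N × Fin N)).Nonempty) (fun p => (W ^ m0) p.1 p.2)
    rw [hδdef, hp]
    exact hPpos p.1 p.2
  have hδle : ∀ i j, δ ≤ (W ^ m0) i j := fun i j =>
    Finset.inf'_le (f := fun p : Fin N × Fin N => (W ^ m0) p.1 p.2) (Finset.mem_univ (i, j))
  have hcontr : ∀ k, S (k + m0) ≤ (1 - 2 * δ) * S k := by
    intro k
    have h1 : ∀ i, (W ^ m0).mulVec (y k) i ≤
        Finset.univ.sup' hne (y k) - δ * S k :=
      fun i => mulVec_le_contr hne (W ^ m0) δ hδpos.le hδle (hrow_pow m0) (y k) i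
    have h2 : ∀ i, Finset.univ.inf' hne (y k) + δ * S k ≤ (W ^ m0).mulVec (y k) i :=
      fun i => inf_le_mulVec_contr hne (W ^ m0) δ hδpos.le hδle (hrow_pow m0) (y k) i
    have hy' : y (k + m0) = (W ^ m0).mulVec (y k) := by
      rw [Nat.add_comm k m0]; exact hy_add m0 k
    have hsup : Finset.univ.sup' hne (y (k + m0)) ≤ Finset.univ.sup' hne (y k) - δ * S k := by
      rw [hy']; exact Finset.sup'_le hne _ fun i _ => h1 i
    have hinf : Finset.univ.inf' hne (y k) + δ * S k ≤ Finset.univ.inf' hne (y (k + m0)) := by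
      rw [hy']; exact Finset.le_inf' hne _ fun i _ => h2 i
    simp only [hSdef] at *
    linarith
  set r : ℝ := max (1 - 2 * δ) 0 with hrdef
  have hr0 : 0 ≤ r := le_max_right _ _
  have hr1 : r < 1 := by
    rw [hrdef, max_lt_iff]
    constructor <;> linarith
  have hcontr' : ∀ k, S (k + m0) ≤ r * S k := fun k =>
    le_trans (hcontr k) (mul_le_mul_of_nonneg_right (le_max_left _ _) (hS_nonneg k))
  have hgeom : ∀ t, S (m0 * t) ≤ r ^ t * S 0 := by
    intro t
    induction t with
    | zero => simp
    | succ t ih =>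
        have : m0 * (t + 1) = m0 * t + m0 := by ring
        rw [this]
        calc S (m0 * t + m0) ≤ r * S (m0 * t) := hcontr' _
          _ ≤ r * (r ^ t * S 0) := mul_le_mul_of_nonneg_left ih hr0
          _ = r ^ (t + 1) * S 0 := by ring
  have hbound : ∀ k, S k ≤ r ^ (k / m0) * S 0 := by
    intro k
    refine le_trans (hS_anti (m0 * (k / m0)) k ?_) (hgeom (k / m0))
    rw [Nat.mul_comm]
    exact Nat.div_mul_le_self k m0
  have hdiv_tendsto : Tendsto (fun k : ℕ => k / m0) atTop atTop :=
    Filter.tendsto_atTop_atTop.2 fun b => ⟨b * m0, fun k hk => (Nat.le_div_iff_mul_le hm0pos).2 hk⟩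
  have hrpow : Tendsto (fun k : ℕ => r ^ (k / m0) * S 0) atTop (nhds 0) := by
    have h1 : Tendsto (fun t : ℕ => r ^ t) atTop (nhds 0) :=
      tendsto_pow_atTop_nhds_zero_of_lt_one hr0 hr1
    have h2 := (h1.comp hdiv_tendsto).mul_const (S 0)
    simpa using h2
  have hS_tendsto : Tendsto S atTop (nhds 0) := squeeze_zero hS_nonneg hbound hrpow
  -- the consensus value
  set c : ℝ := ((1 : Fin N → ℝ) ⬝ᵥ x0) / N with hcdef
  have hNR : (0:ℝ) < N := Nat.cast_pos.mpr hN
  have hdot : (1 : Fin N → ℝ) ⬝ᵥ x0 = ∑ i, x0 i := by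
    simp [dotProduct]
  have hcard : (Finset.univ : Finset (Fin N)).card = N := Finset.card_univ.trans (Fintype.card_fin N)
  have hc_between : ∀ k, Finset.univ.inf' hne (y k) ≤ c ∧ c ≤ Finset.univ.sup' hne (y k) := by
    intro k
    have hsum : ∑ i, y k i = c * N := by
      rw [hcdef, hdot, div_mul_cancel₀ _ (ne_of_gt hNR)]
      exact hsum_pres k
    have hlow : (N : ℝ) * Finset.univ.inf' hne (y k) ≤ ∑ i, y k i := by
      calc (N : ℝ) * Finset.univ.inf' hne (y k)
          = ∑ _i : Fin N, Finset.univ.inf' hne (y k) := by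
            rw [Finset.sum_const, hcard, nsmul_eq_mul]
        _ ≤ ∑ i, y k i := Finset.sum_le_sum fun i _ => Finset.inf'_le _ (Finset.mem_univ i)
    have hhigh : ∑ i, y k i ≤ (N : ℝ) * Finset.univ.sup' hne (y k) := by
      calc ∑ i, y k i ≤ ∑ _i : Fin N, Finset.univ.sup' hne (y k) :=
            Finset.sum_le_sum fun i _ => Finset.le_sup' _ (Finset.mem_univ i)
        _ = (N : ℝ) * Finset.univ.sup' hne (y k) := by
            rw [Finset.sum_const, hcard, nsmul_eq_mul]
    constructor
    · nlinarith
    · nlinarith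
  have hcoord : ∀ k i, |y k i - c| ≤ S k := by
    intro k i
    obtain ⟨hl, hh⟩ := hc_between k
    have h1 : y k i ≤ Finset.univ.sup' hne (y k) := Finset.le_sup' _ (Finset.mem_univ i)
    have h2 : Finset.univ.inf' hne (y k) ≤ y k i := Finset.inf'_le _ (Finset.mem_univ i)
    rw [abs_le]
    constructor <;> simp only [hSdef] <;> linarith
  rw [tendsto_pi_nhds]
  intro i
  rw [tendsto_iff_dist_tendsto_zero]
  refine squeeze_zero (fun k => dist_nonneg) (fun k => ?_) hS_tendsto
  rw [Real.dist_eq]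
  exact hcoord k i
end

section
/- Continuous-time privacy disclosure formula: if agent υ's dynamics on [0,t₀] are ẋ_υ(t) = c₁(y_m^{(υ)}(t) - x_υ(t)) + c₁p_υ^{(υ)}(t), its transmitted message is y_υ^{(m)}(t) = x_υ(t) + p_υ^{(m)}(t), and p_υ^{(υ)}(t) = -p_υ^{(m)}(t) for all t (zero-sum with single out-neighbor m), then x_υ(0) = x_υ(t₀) - c₁∫₀^{t₀}[y_m^{(υ)}(τ) - y_υ^{(m)}(τ)]dτ. -/
/-- Continuous-time privacy disclosure formula for the single-neighbor case. -/
theorem stmt18 (c₁ t₀ : ℝ) (hc₁ : c₁ ≠ 0) (ht₀ : 0 < t₀)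
    (x ymv yvm pvm pvv : ℝ → ℝ)
    (hymc : ContinuousOn ymv (Set.Icc 0 t₀))
    (hpmc : ContinuousOn pvm (Set.Icc 0 t₀))
    (hx : ∀ t ∈ Set.Icc (0:ℝ) t₀,
      HasDerivAt x (c₁ * (ymv t - x t) + c₁ * pvv t) t)
    (hmsg : ∀ t ∈ Set.Icc (0:ℝ) t₀, yvm t = x t + pvm t)
    (hzs : ∀ t ∈ Set.Icc (0:ℝ) t₀, pvv t = -pvm t) :
    x 0 = x t₀ - c₁ * ∫ τ in (0:ℝ)..t₀, (ymv τ - yvm τ) := by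
  have hxc : ContinuousOn x (Set.Icc 0 t₀) := fun t ht =>
    (hx t ht).continuousAt.continuousWithinAt
  have hderiv : ∀ t ∈ Set.Icc (0:ℝ) t₀,
      HasDerivAt x (c₁ * (ymv t - yvm t)) t := by
    intro t ht
    have h := hx t ht
    have : c₁ * (ymv t - x t) + c₁ * pvv t = c₁ * (ymv t - yvm t) := by
      rw [hzs t ht, hmsg t ht]; ring
    rwa [this] at h
  have hcont : ContinuousOn (fun t => c₁ * (ymv t - yvm t)) (Set.Icc 0 t₀) := by
    apply ContinuousOn.mul continuousOn_const
    apply hymc.sub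
    have : ∀ t ∈ Set.Icc (0:ℝ) t₀, yvm t = x t + pvm t := hmsg
    exact ContinuousOn.congr (hxc.add hpmc) this
  have hint : IntervalIntegrable (fun t => c₁ * (ymv t - yvm t))
      MeasureTheory.volume 0 t₀ := by
    apply ContinuousOn.intervalIntegrable
    rwa [Set.uIcc_of_le ht₀.le]
  have key := intervalIntegral.integral_eq_sub_of_hasDerivAt
    (f := x) (f' := fun t => c₁ * (ymv t - yvm t))
    (fun t ht => hderiv t (by rwa [Set.uIcc_of_le ht₀.le] at ht)) hint
  rw [intervalIntegral.integral_const_mul] at key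
  linarith [key]
end
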